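/- arXiv:1310.5428 — 3 statements merged into one kernel-verified Lean document; each statement's English description precedes it below -/
import Mathlib

section
/- If a 2n × 2n complex matrix Ω is invertible and of Type-III (i.e., built from 2×2 blocks where the (m,m) diagonal block is t_m·I_2 and the (m,l) off-diagonal block for m < l is [[a_{ml}, b_{ml}],[-conj(b_{ml}), conj(a_{ml})]] with the (l,m) block being [[conj(a_{ml}), -b_{ml}],[conj(b_{ml}), a_{ml}]]), then Ω^{-1} is a Type-I matrix; in particular, all 2×2 diagonal blocks of Ω^{-1} are scalar multiples of the 2×2 identity matrix. -/
open Matrix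

/-- A `2n × 2n` complex matrix (indexed by `Fin n × Fin 2`) is of Type-I if every
`2×2` diagonal block is `t_m·I₂` and for `m < l` the `(m,l)` block `[[a,b],[c,d]]`
is paired with the `(l,m)` block `[[d,-b],[-c,a]]`. -/
def TypeI {n : ℕ} (M : Matrix (Fin n × Fin 2) (Fin n × Fin 2) ℂ) : Prop :=
  (∀ m : Fin n,
      M (m, 0) (m, 0) = M (m, 1) (m, 1) ∧
      M (m, 0) (m, 1) = 0 ∧ M (m, 1) (m, 0) = 0) ∧
    ∀ m l : Fin n, m < l →
      M (l, 0) (m, 0) = M (m, 1) (l, 1) ∧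
      M (l, 0) (m, 1) = -M (m, 0) (l, 1) ∧
      M (l, 1) (m, 0) = -M (m, 1) (l, 0) ∧
      M (l, 1) (m, 1) = M (m, 0) (l, 0)

/-- A `2n × 2n` complex matrix is of Type-III if every `2×2` diagonal block is
`t_m·I₂` and for `m < l` the `(m,l)` block is `[[a,b],[-conj b, conj a]]` with
`(l,m)` block `[[conj a, -b],[conj b, a]]`. -/
def TypeIII {n : ℕ} (M : Matrix (Fin n × Fin 2) (Fin n × Fin 2) ℂ) : Prop :=
  (∀ m : Fin n,
      M (m, 0) (m, 0) = M (m, 1) (m, 1) ∧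
      M (m, 0) (m, 1) = 0 ∧ M (m, 1) (m, 0) = 0) ∧
    ∀ m l : Fin n, m < l →
      M (m, 1) (l, 0) = -star (M (m, 0) (l, 1)) ∧
      M (m, 1) (l, 1) = star (M (m, 0) (l, 0)) ∧
      M (l, 0) (m, 0) = star (M (m, 0) (l, 0)) ∧
      M (l, 0) (m, 1) = -M (m, 0) (l, 1) ∧
      M (l, 1) (m, 0) = star (M (m, 0) (l, 1)) ∧
      M (l, 1) (m, 1) = M (m, 0) (l, 0)

/-!
Type-I says that for all `m, l` the `(l,m)` block is the adjugate of the `(m,l)` block (for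
`m = l` this forces `t·I₂`); with `J = I_n ⊗ [[0, 1], [-1, 0]]` this is the relation `M J = J Mᵀ`.
A Type-III matrix is in particular of Type-I. Since `J` is invertible, `M J = J Mᵀ` means
`Mᵀ = J⁻¹ M J`, and inverting both sides gives the same relation for `M⁻¹`.
-/

open scoped Kronecker

theorem Matrix.nonsing_inv_mul_eq_mul_transpose_nonsing_inv {ι R : Type*} [Fintype ι]
    [DecidableEq ι] [CommRing R] {M J : Matrix ι ι R} (hJ : IsUnit J.det)
    (h : M * J = J * Mᵀ) : M⁻¹ * J = J * M⁻¹ᵀ := by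
  have hMt : Mᵀ = J⁻¹ * M * J := by
    rw [Matrix.mul_assoc, h, nonsing_inv_mul_cancel_left _ _ hJ]
  rw [transpose_nonsing_inv, hMt, mul_inv_rev, mul_inv_rev, nonsing_inv_nonsing_inv _ hJ,
    ← Matrix.mul_assoc, ← Matrix.mul_assoc, mul_nonsing_inv _ hJ, Matrix.one_mul]

def quaternionJ (n : ℕ) : Matrix (Fin n × Fin 2) (Fin n × Fin 2) ℂ :=
  1 ⊗ₖ !![0, 1; -1, 0]

theorem isUnit_det_quaternionJ (n : ℕ) : IsUnit (quaternionJ n).det := by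
  refine isUnit_det_of_right_inverse (B := 1 ⊗ₖ !![0, -1; 1, 0]) ?_
  have : (!![0, 1; -1, 0] * !![0, -1; 1, 0] : Matrix (Fin 2) (Fin 2) ℂ) = 1 := by
    ext i j; fin_cases i <;> fin_cases j <;> simp
  rw [quaternionJ, ← mul_kronecker_mul, Matrix.one_mul, this, one_kronecker_one]

section

variable {n : ℕ} (M : Matrix (Fin n × Fin 2) (Fin n × Fin 2) ℂ) (p : Fin n × Fin 2) (m : Fin n)

@[simp] theorem mul_quaternionJ_apply_zero : (M * quaternionJ n) p (m, 0) = -M p (m, 1) := by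
  simp [quaternionJ, mul_apply, Fintype.sum_prod_type, Fin.sum_univ_two, one_apply]

@[simp] theorem mul_quaternionJ_apply_one : (M * quaternionJ n) p (m, 1) = M p (m, 0) := by
  simp [quaternionJ, mul_apply, Fintype.sum_prod_type, Fin.sum_univ_two, one_apply]

@[simp] theorem quaternionJ_mul_apply_zero : (quaternionJ n * M) (m, 0) p = M (m, 1) p := by
  simp [quaternionJ, mul_apply, Fintype.sum_prod_type, Fin.sum_univ_two, one_apply]

@[simp] theorem quaternionJ_mul_apply_one : (quaternionJ n * M) (m, 1) p = -M (m, 0) p := by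
  simp [quaternionJ, mul_apply, Fintype.sum_prod_type, Fin.sum_univ_two, one_apply]

end

section

variable {n : ℕ} {M : Matrix (Fin n × Fin 2) (Fin n × Fin 2) ℂ}

theorem mul_quaternionJ_eq_iff :
    M * quaternionJ n = quaternionJ n * Mᵀ ↔ ∀ m l : Fin n,
      M (l, 0) (m, 1) = -M (m, 0) (l, 1) ∧ M (l, 1) (m, 1) = M (m, 0) (l, 0) ∧
      M (l, 1) (m, 0) = -M (m, 1) (l, 0) := by
  constructor
  · intro h m l
    have h₀₀ := congrFun (congrFun h (m, 0)) (l, 0)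
    have h₀₁ := congrFun (congrFun h (m, 0)) (l, 1)
    have h₁₁ := congrFun (congrFun h (m, 1)) (l, 1)
    simp only [mul_quaternionJ_apply_zero, mul_quaternionJ_apply_one,
      quaternionJ_mul_apply_zero, quaternionJ_mul_apply_one, transpose_apply] at h₀₀ h₀₁ h₁₁
    exact ⟨h₀₀.symm, h₀₁.symm, by linear_combination h₁₁⟩
  · intro h
    ext ⟨m, a⟩ ⟨l, b⟩
    fin_cases a <;> fin_cases b <;> simp [(h m l).1, (h m l).2.1, (h m l).2.2, (h l m).2.1]

theorem typeI_iff_forall : TypeI M ↔ ∀ m l : Fin n,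
    M (l, 0) (m, 1) = -M (m, 0) (l, 1) ∧ M (l, 1) (m, 1) = M (m, 0) (l, 0) ∧
      M (l, 1) (m, 0) = -M (m, 1) (l, 0) := by
  constructor
  · rintro ⟨hdiag, hoff⟩ m l
    rcases lt_trichotomy m l with hml | rfl | hlm
    · obtain ⟨-, h₁, h₂, h₃⟩ := hoff m l hml
      exact ⟨h₁, h₃, h₂⟩
    · obtain ⟨h₀, h₁, h₂⟩ := hdiag m
      simp [h₀, h₁, h₂]
    · obtain ⟨h₀, h₁, h₂, h₃⟩ := hoff l m hlm
      exact ⟨by rw [h₁, neg_neg], h₀.symm, by rw [h₂, neg_neg]⟩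
  · intro h
    refine ⟨fun m => ?_, fun m l _ => ?_⟩
    · obtain ⟨h₁, h₂, h₃⟩ := h m m
      exact ⟨h₂.symm, CharZero.eq_neg_self_iff.mp h₁, CharZero.eq_neg_self_iff.mp h₃⟩
    · exact ⟨(h l m).2.1.symm, (h m l).1, (h m l).2.2, (h m l).2.1⟩

theorem typeI_iff_mul_quaternionJ_eq : TypeI M ↔ M * quaternionJ n = quaternionJ n * Mᵀ :=
  typeI_iff_forall.trans mul_quaternionJ_eq_iff.symm

theorem TypeIII.typeI (hM : TypeIII M) : TypeI M := by
  refine ⟨hM.1, fun m l hml => ?_⟩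
  obtain ⟨h₁, h₂, h₃, h₄, h₅, h₆⟩ := hM.2 m l hml
  exact ⟨h₃.trans h₂.symm, h₄, by rw [h₅, h₁, neg_neg], h₆⟩

theorem TypeI.inv (hM : TypeI M) : TypeI M⁻¹ :=
  typeI_iff_mul_quaternionJ_eq.mpr <| nonsing_inv_mul_eq_mul_transpose_nonsing_inv
    (isUnit_det_quaternionJ n) (typeI_iff_mul_quaternionJ_eq.mp hM)

theorem TypeI.diagBlock_eq_smul_one (hM : TypeI M) (m : Fin n) :
    (fun i j : Fin 2 => M (m, i) (m, j)) = M (m, 0) (m, 0) • (1 : Matrix (Fin 2) (Fin 2) ℂ) := by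
  obtain ⟨h₀, h₁, h₂⟩ := hM.1 m
  ext i j
  fin_cases i <;> fin_cases j <;> simp [h₀, h₁, h₂]

end

theorem inv_typeIII_is_typeI_general {n : ℕ}
    (M : Matrix (Fin n × Fin 2) (Fin n × Fin 2) ℂ)
    (hM : TypeIII M) :
    TypeI M⁻¹ ∧
      ∀ m : Fin n, ∃ t : ℂ,
        (fun i j : Fin 2 => M⁻¹ (m, i) (m, j)) = t • (1 : Matrix (Fin 2) (Fin 2) ℂ) :=
  ⟨hM.typeI.inv, fun m => ⟨_, hM.typeI.inv.diagBlock_eq_smul_one m⟩⟩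

/-- The inverse of an invertible Type-III matrix is a Type-I matrix; in particular
all `2×2` diagonal blocks of the inverse are scalar multiples of `I₂`. -/
theorem inv_typeIII_is_typeI {n : ℕ}
    (M : Matrix (Fin n × Fin 2) (Fin n × Fin 2) ℂ)
    (hM : TypeIII M) (hinv : IsUnit M.det) :
    TypeI M⁻¹ ∧
      ∀ m : Fin n, ∃ t : ℂ,
        (fun i j : Fin 2 => M⁻¹ (m, i) (m, j)) = t • (1 : Matrix (Fin 2) (Fin 2) ℂ) :=
  inv_typeIII_is_typeI_general M hM
end

section
/- Let u_1, …, u_K be independent nonnegative random variables each bounded by 2η²n with E u_h ≤ 2 and define W = (1/(np)) Σ_{h=1}^K u_h. Then for every positive integer m, E W^m ≤ C(6K/(np) + 2η²m/p)^m for an absolute constant C; consequently, if K = o(np) and η = η_n → 0, choosing m = ⌊log p⌋ gives E W^m = o(p^{-t}) for any fixed t > 0. -/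
open MeasureTheory ProbabilityTheory Filter

/-! Write `S = ∑ₕ uₕ` and `Tₕ = S - uₕ`. Since `uₕ ≤ B` and `Tₕ` is independent of `uₕ`,
`E S^(m+1) = ∑ₕ E[S^m uₕ] ≤ ∑ₕ E[(Tₕ + B)^m] E uₕ ≤ 2K E (S + B)^m`. Expanding `(S + B)^m`
binomially, strong induction on `m` gives `E S^m ≤ (6K + Bm)^m`: with `a = 6K + B(m+1)` the
factor `(1 + B/a)^m ≤ e < 3` is absorbed by `2K · 3 ≤ a`. For `m = ⌊log p⌋` the base of the
rescaled bound is eventually below `e^{-(t+1)}`, so the moment is at most `e^{t+1} p^{-(t+1)}`. -/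

lemma add_pow_le_three_mul_pow {a b : ℝ} {N : ℕ} (ha : 0 ≤ a) (hb : 0 ≤ b) (hNb : N * b ≤ a) :
    (a + b) ^ N ≤ 3 * a ^ N := by
  rcases ha.eq_or_lt with rfl | ha
  · rcases N.eq_zero_or_pos with rfl | hN
    · norm_num
    · have hb0 : b = 0 := by
        have : (0 : ℝ) < N := by exact_mod_cast hN
        nlinarith
      simp [hb0, hN.ne']
  have hexp : (1 + b / a) ^ N ≤ Real.exp 1 := calc
    (1 + b / a) ^ N ≤ Real.exp (b / a) ^ N := by
      gcongr; linarith [Real.add_one_le_exp (b / a)]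
    _ = Real.exp (N * (b / a)) := (Real.exp_nat_mul _ _).symm
    _ ≤ Real.exp 1 := Real.exp_le_exp.2 (by rwa [mul_div_assoc', div_le_one ha])
  calc (a + b) ^ N = a ^ N * (1 + b / a) ^ N := by
        rw [← mul_pow, mul_one_add, mul_div_cancel₀ _ ha.ne']
    _ ≤ a ^ N * 3 := by gcongr; linarith [Real.exp_one_lt_d9]
    _ = 3 * a ^ N := mul_comm _ _

lemma integral_add_const_pow_le {Ω : Type*} [MeasurableSpace Ω] {μ : Measure Ω} {f : Ω → ℝ}
    {a b : ℝ} {N : ℕ} (hb : 0 ≤ b)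
    (hint : ∀ j ≤ N, Integrable (fun ω => f ω ^ j) μ)
    (hmom : ∀ j ≤ N, ∫ ω, f ω ^ j ∂μ ≤ a ^ j) :
    ∫ ω, (f ω + b) ^ N ∂μ ≤ (a + b) ^ N := by
  simp_rw [add_pow]
  rw [integral_finsetSum _ fun j hj =>
    ((hint j (Finset.mem_range_succ_iff.mp hj)).mul_const _).mul_const _]
  refine Finset.sum_le_sum fun j hj => ?_
  simp_rw [integral_mul_const]
  gcongr
  exact hmom j (Finset.mem_range_succ_iff.mp hj)

section

variable {Ω ι : Type*} [MeasurableSpace Ω] {μ : Measure Ω} [Fintype ι] {u : ι → Ω → ℝ} {B : ℝ}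

lemma integrable_comp_of_nonneg_of_le [IsFiniteMeasure μ] (hmeas : ∀ i, Measurable (u i))
    (hu0 : ∀ i ω, 0 ≤ u i ω) (huB : ∀ i ω, u i ω ≤ B) {φ : (ι → ℝ) → ℝ} (hφ : Continuous φ) :
    Integrable (fun ω => φ (fun i => u i ω)) μ := by
  obtain ⟨C, hC⟩ := (isCompact_univ_pi fun _ => isCompact_Icc (a := (0 : ℝ)) (b := B)
    ).exists_bound_of_continuousOn hφ.continuousOn
  exact .of_bound (hφ.measurable.comp (measurable_pi_lambda _ hmeas)).aestronglyMeasurable C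
    (ae_of_all _ fun ω => hC _ fun i _ => ⟨hu0 i ω, huB i ω⟩)

variable [IsProbabilityMeasure μ]

lemma integral_sum_pow_mul_le (hmeas : ∀ i, Measurable (u i)) (hindep : iIndepFun u μ)
    (hu0 : ∀ i ω, 0 ≤ u i ω) (huB : ∀ i ω, u i ω ≤ B) (i : ι) (N : ℕ) :
    ∫ ω, (∑ j, u j ω) ^ N * u i ω ∂μ ≤ (∫ ω, u i ω ∂μ) * ∫ ω, (∑ j, u j ω + B) ^ N ∂μ := by
  classical
  set T : Ω → ℝ := fun ω => ∑ j ∈ Finset.univ.erase i, u j ω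
  have hTS : ∀ ω, T ω + u i ω = ∑ j, u j ω := fun ω =>
    Finset.sum_erase_add _ _ (Finset.mem_univ i)
  have hT0 : ∀ ω, 0 ≤ T ω := fun ω => Finset.sum_nonneg fun j _ => hu0 j ω
  have hindepT : IndepFun (fun ω => (T ω + B) ^ N) (u i) μ := by
    have := hindep.indepFun_finsetSum_of_notMem hmeas (Finset.notMem_erase i Finset.univ)
    simpa [Function.comp_def, T] using
      this.comp ((measurable_id.add_const B).pow_const N) measurable_id
  have hint : ∀ φ : (ι → ℝ) → ℝ, Continuous φ → Integrable (fun ω => φ (fun j => u j ω)) μ :=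
    fun φ hφ => integrable_comp_of_nonneg_of_le hmeas hu0 huB hφ
  have hTint : Integrable (fun ω => (T ω + B) ^ N) μ :=
    hint (fun x => (∑ j ∈ Finset.univ.erase i, x j + B) ^ N) (by fun_prop)
  have hTS_le : ∀ ω, T ω + B ≤ ∑ j, u j ω + B := fun ω => by linarith [hTS ω, hu0 i ω]
  calc ∫ ω, (∑ j, u j ω) ^ N * u i ω ∂μ
      ≤ ∫ ω, (T ω + B) ^ N * u i ω ∂μ := by
        refine integral_mono_of_nonneg (ae_of_all _ fun ω => ?_)
          (hint (fun x => (∑ j ∈ Finset.univ.erase i, x j + B) ^ N * x i) (by fun_prop))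
          (ae_of_all _ fun ω => ?_)
        · exact mul_nonneg (pow_nonneg (Finset.sum_nonneg fun j _ => hu0 j ω) N) (hu0 i ω)
        · refine mul_le_mul_of_nonneg_right (pow_le_pow_left₀ ?_ ?_ N) (hu0 i ω)
          · exact Finset.sum_nonneg fun j _ => hu0 j ω
          · linarith [hTS ω, huB i ω]
    _ = (∫ ω, (T ω + B) ^ N ∂μ) * ∫ ω, u i ω ∂μ :=
        hindepT.integral_fun_mul_eq_mul_integral hTint.aestronglyMeasurable
          (hmeas i).aestronglyMeasurable
    _ ≤ (∫ ω, (∑ j, u j ω + B) ^ N ∂μ) * ∫ ω, u i ω ∂μ := by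
        refine mul_le_mul_of_nonneg_right (integral_mono hTint
          (hint (fun x => (∑ j, x j + B) ^ N) (by fun_prop)) fun ω => ?_)
          (integral_nonneg (hu0 i))
        exact pow_le_pow_left₀ (by linarith [hT0 ω, hu0 i ω, huB i ω]) (hTS_le ω) N
    _ = _ := mul_comm _ _

theorem integral_sum_pow_le (hmeas : ∀ i, Measurable (u i)) (hindep : iIndepFun u μ)
    (hu0 : ∀ i ω, 0 ≤ u i ω) (huB : ∀ i ω, u i ω ≤ B) (hB : 0 ≤ B) {c : ℝ} (hc0 : 0 ≤ c)
    (hc : ∀ i, ∫ ω, u i ω ∂μ ≤ c) (m : ℕ) :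
    ∫ ω, (∑ i, u i ω) ^ m ∂μ ≤ (3 * c * Fintype.card ι + B * m) ^ m := by
  have hint : ∀ φ : (ι → ℝ) → ℝ, Continuous φ → Integrable (fun ω => φ (fun j => u j ω)) μ :=
    fun φ hφ => integrable_comp_of_nonneg_of_le hmeas hu0 huB hφ
  induction m using Nat.strong_induction_on with
  | _ m ih =>
  rcases m with _ | N
  · simp
  set K : ℝ := (Fintype.card ι : ℝ)
  set a : ℝ := 3 * c * K + B * (N + 1 : ℕ)
  have hcK : 3 * c * K ≤ a := le_add_of_nonneg_right (by positivity)
  have hNB : N * B ≤ a := by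
    simp only [a]; push_cast; nlinarith [show 0 ≤ 3 * c * K by positivity]
  have hmom : ∀ j ≤ N, ∫ ω, (∑ i, u i ω) ^ j ∂μ ≤ a ^ j := fun j hj => by
    refine (ih j (by omega)).trans (pow_le_pow_left₀ (by positivity) ?_ j)
    have : (j : ℝ) ≤ (N + 1 : ℕ) := by exact_mod_cast hj.trans N.le_succ
    exact add_le_add_right (mul_le_mul_of_nonneg_left this hB) _
  have hbinom : ∫ ω, (∑ i, u i ω + B) ^ N ∂μ ≤ (a + B) ^ N :=
    integral_add_const_pow_le hB (fun j _ => hint (fun x => (∑ i, x i) ^ j) (by fun_prop)) hmom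
  calc ∫ ω, (∑ i, u i ω) ^ (N + 1) ∂μ
      = ∑ i, ∫ ω, (∑ j, u j ω) ^ N * u i ω ∂μ := by
        simp_rw [pow_succ, Finset.mul_sum]
        exact integral_finsetSum _ fun i _ => hint (fun x => (∑ j, x j) ^ N * x i) (by fun_prop)
    _ ≤ ∑ _i : ι, c * (a + B) ^ N := Finset.sum_le_sum fun i _ =>
        (integral_sum_pow_mul_le hmeas hindep hu0 huB i N).trans
          (mul_le_mul (hc i) hbinom (integral_nonneg fun ω => pow_nonneg
            (add_nonneg (Finset.sum_nonneg fun j _ => hu0 j ω) hB) N) hc0)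
    _ = K * c * (a + B) ^ N := by
        simp only [Finset.sum_const, Finset.card_univ, nsmul_eq_mul, K]; ring
    _ ≤ K * c * (3 * a ^ N) := by
        gcongr
        exact add_pow_le_three_mul_pow (by positivity) hB hNB
    _ = 3 * c * K * a ^ N := by ring
    _ ≤ a ^ (N + 1) := by rw [pow_succ']; gcongr

theorem integral_rescaled_sum_pow_le (hmeas : ∀ i, Measurable (u i)) (hindep : iIndepFun u μ)
    {n p : ℕ} (hn : 0 < n) (hp : 0 < p) {η : ℝ} (hu : ∀ i ω, 0 ≤ u i ω ∧ u i ω ≤ 2 * η ^ 2 * n)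
    (hmean : ∀ i, ∫ ω, u i ω ∂μ ≤ 2) (m : ℕ) :
    ∫ ω, (((n : ℝ) * p)⁻¹ * ∑ i, u i ω) ^ m ∂μ ≤
      (6 * Fintype.card ι / ((n : ℝ) * p) + 2 * η ^ 2 * m / p) ^ m := by
  have hmom := integral_sum_pow_le hmeas hindep (fun i ω => (hu i ω).1) (fun i ω => (hu i ω).2)
    (by positivity) zero_le_two hmean m
  have hscale : 6 * (Fintype.card ι : ℝ) / ((n : ℝ) * p) + 2 * η ^ 2 * m / p =
      ((n : ℝ) * p)⁻¹ * (3 * 2 * Fintype.card ι + 2 * η ^ 2 * n * m) := by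
    field_simp
    ring
  simp_rw [hscale, mul_pow, integral_const_mul]
  gcongr

end

lemma natCast_floor_log_le_self {x : ℝ} (hx : 0 ≤ x) : (⌊Real.log x⌋₊ : ℝ) ≤ x := by
  rcases le_total (Real.log x) 0 with hlog | hlog
  · simpa [Nat.floor_of_nonpos hlog] using hx
  · exact (Nat.floor_le hlog).trans (Real.log_le_self hx)

lemma tendsto_pow_floor_log_mul_rpow {α : Type*} {l : Filter α} {ε P : α → ℝ}
    (hε0 : ∀ i, 0 ≤ ε i) (hε : Tendsto ε l (nhds 0)) (hP : Tendsto P l atTop) {t : ℝ}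
    (ht : 0 ≤ t) : Tendsto (fun i => ε i ^ ⌊Real.log (P i)⌋₊ * P i ^ t) l (nhds 0) := by
  have hlim : Tendsto (fun i => Real.exp (t + 1) * (P i)⁻¹) l (nhds 0) := by
    simpa using (tendsto_inv_atTop_zero.comp hP).const_mul (Real.exp (t + 1))
  refine squeeze_zero' ?_ ?_ hlim
  · filter_upwards [hP.eventually_ge_atTop 0] with i hPi
    exact mul_nonneg (pow_nonneg (hε0 i) _) (Real.rpow_nonneg hPi t)
  filter_upwards [hε.eventually (ge_mem_nhds (Real.exp_pos (-(t + 1)))),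
    hP.eventually_gt_atTop 0] with i hεi hPi
  set m := ⌊Real.log (P i)⌋₊
  calc ε i ^ m * P i ^ t ≤ Real.exp (-(t + 1)) ^ m * P i ^ t := by gcongr; exact hε0 i
    _ = Real.exp (m * -(t + 1) + Real.log (P i) * t) := by
        rw [← Real.exp_nat_mul, Real.rpow_def_of_pos hPi, Real.exp_add]
    _ ≤ Real.exp (t + 1 + -Real.log (P i)) :=
        Real.exp_le_exp.2 (by nlinarith [Nat.sub_one_lt_floor (Real.log (P i))])
    _ = Real.exp (t + 1) * (P i)⁻¹ := by rw [Real.exp_add, Real.exp_neg, Real.exp_log hPi]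

/-- Multinomial moment bound: for independent nonnegative `u_h ≤ 2η²n` with
`E u_h ≤ 2` and `W = (1/(np)) Σ_h u_h`, one has
`E W^m ≤ C (6K/(np) + 2η²m/p)^m` for an absolute constant `C`; consequently if
`K = o(np)` and `η = η_n → 0`, taking `m = ⌊log p⌋` gives `E W^m = o(p^{-t})` for
every fixed `t > 0`. -/
theorem multinomial_moment_bound :
    ∃ C : ℝ, 0 < C ∧
      ((∀ (Ω : Type) (m0 : MeasurableSpace Ω) (μ : Measure Ω),
          IsProbabilityMeasure μ →
          ∀ (K n p : ℕ) (η : ℝ) (u : Fin K → Ω → ℝ),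
            0 < n → 0 < p → 0 < η →
            (∀ h, Measurable (u h)) →
            iIndepFun u μ →
            (∀ h ω, 0 ≤ u h ω ∧ u h ω ≤ 2 * η ^ 2 * n) →
            (∀ h, ∫ ω, u h ω ∂μ ≤ 2) →
            ∀ m : ℕ, 0 < m →
              ∫ ω, (((n : ℝ) * p)⁻¹ * ∑ h, u h ω) ^ m ∂μ ≤
                C * (6 * K / ((n : ℝ) * p) + 2 * η ^ 2 * m / p) ^ m) ∧
        ∀ (Ω : ℕ → Type) (m0 : ∀ i, MeasurableSpace (Ω i))
          (μ : ∀ i, Measure (Ω i)), (∀ i, IsProbabilityMeasure (μ i)) →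
          ∀ (K n p : ℕ → ℕ) (η : ℕ → ℝ)
            (u : ∀ i : ℕ, Fin (K i) → Ω i → ℝ),
            (∀ i, 0 < n i) → (∀ i, 0 < p i) → (∀ i, 0 < η i) →
            (∀ i h, Measurable (u i h)) →
            (∀ i, iIndepFun (u i) (μ i)) →
            (∀ i h ω, 0 ≤ u i h ω ∧ u i h ω ≤ 2 * η i ^ 2 * n i) →
            (∀ i h, ∫ ω, u i h ω ∂(μ i) ≤ 2) →
            Tendsto (fun i => (K i : ℝ) / ((n i : ℝ) * p i)) atTop (nhds 0) →
            Tendsto η atTop (nhds 0) →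
            Tendsto (fun i => (p i : ℝ)) atTop atTop →
            ∀ t : ℝ, 0 < t →
              Tendsto
                (fun i =>
                  (∫ ω, (((n i : ℝ) * p i)⁻¹ * ∑ h, u i h ω) ^
                      (⌊Real.log (p i)⌋₊) ∂(μ i)) * (p i : ℝ) ^ t)
                atTop (nhds 0)) := by
  refine ⟨1, one_pos, fun Ω _ μ _ K n p η u hn hp _ hmeas hindep hu hmean m _ => ?_,
    fun Ω _ μ _ K n p η u hn hp _ hmeas hindep hu hmean hK hη hpinf t ht => ?_⟩
  · simpa using integral_rescaled_sum_pow_le hmeas hindep hn hp hu hmean m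
  set ε : ℕ → ℝ := fun i =>
    6 * K i / ((n i : ℝ) * p i) + 2 * η i ^ 2 * ⌊Real.log (p i)⌋₊ / p i
  have hε : Tendsto ε atTop (nhds 0) := by
    have hlog : Tendsto (fun i => 2 * η i ^ 2 * ⌊Real.log (p i)⌋₊ / p i) atTop (nhds 0) := by
      refine squeeze_zero (fun i => by positivity) (fun i => ?_)
        (by simpa using (hη.pow 2).const_mul 2)
      rw [div_le_iff₀ (by exact_mod_cast hp i)]
      exact mul_le_mul_of_nonneg_left (natCast_floor_log_le_self (Nat.cast_nonneg _))
        (by positivity)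
    convert (hK.const_mul 6).add hlog using 2 with i
    · simp only [ε]; ring
    · simp
  have hpt : ∀ i, 0 ≤ (p i : ℝ) ^ t := fun i => by positivity
  refine squeeze_zero (fun i => mul_nonneg (integral_nonneg fun ω => ?_) (hpt i)) (fun i => ?_)
    (tendsto_pow_floor_log_mul_rpow (fun i => by positivity) hε hpinf ht.le)
  · exact pow_nonneg (mul_nonneg (by positivity) (Finset.sum_nonneg fun h _ => (hu i h ω).1)) _
  · refine mul_le_mul_of_nonneg_right ?_ (hpt i)
    simpa using
      integral_rescaled_sum_pow_le (hmeas i) (hindep i) (hn i) (hp i) (hu i) (hmean i) _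
end

section
/- Fix y ∈ (0,∞) and z ∈ ℂ⁺. The function m(z) = (1 - y - z + √((1 - z - y)² - 4yz)) / (2yz), with the branch of the square root chosen to have positive imaginary part, is the unique solution in ℂ⁺ of the equation m = 1/(1 - z - y - yzm). -/
/-!
Clearing the denominator turns the fixed-point equation into the quadratic
`y z m² - (1 - z - y) m + 1 = 0`, whose roots are `m± = (1 - y - z ± s) / (2 y z)`, and
`1 - z - y - y z m± = (1 - y - z ∓ s) / 2`. Writing `u = z - (1 + y)`, we have
`s² = u² - 4y`, so `(s - u)(s + u) = -4y < 0`; as `s + u` lies in `ℂ⁺`, so does `s - u`, i.e.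
`Im s > Im z`. Hence `1 - z - y - y z m₊` lies in the lower half-plane and `m₊`, its inverse, in
`ℂ⁺`, while `1 - z - y - y z m₋` lies in `ℂ⁺`, so `m₋` does not.
-/

open Complex

namespace Complex

theorem inv_im_pos_iff {w : ℂ} : 0 < w⁻¹.im ↔ w.im < 0 := by
  rcases eq_or_ne w 0 with rfl | hw
  · simp
  · rw [inv_im, div_pos_iff_of_pos_right (normSq_pos.2 hw), neg_pos]

theorem inv_im_neg_iff {w : ℂ} : w⁻¹.im < 0 ↔ 0 < w.im := by
  simpa using (inv_im_pos_iff (w := w⁻¹)).symm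

theorem im_lt_im_of_sq_eq_sq_sub_ofReal {u s : ℂ} {c : ℝ} (hc : 0 < c) (hu : 0 ≤ u.im)
    (hs : 0 < s.im) (h : s ^ 2 = u ^ 2 - c) : u.im < s.im := by
  have hsum : 0 < (s + u).im := by rw [add_im]; linarith
  have hsum0 : s + u ≠ 0 := fun h0 => by simp [h0] at hsum
  have hdiff : s - u = (-c : ℝ) * (s + u)⁻¹ := by
    rw [eq_mul_inv_iff_mul_eq₀ hsum0]
    push_cast
    linear_combination h
  have : 0 < (s - u).im := by
    rw [hdiff, im_ofReal_mul]
    exact mul_pos_of_neg_of_neg (by linarith) (inv_im_neg_iff.2 hsum)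
  rwa [sub_im, sub_pos] at this

end Complex

section FixedPoint

variable {K : Type*} [Field K] [NeZero (2 : K)] {y z : K}

theorem mp_denom_eq (hyz : y * z ≠ 0) (t : K) :
    1 - z - y - y * z * ((1 - y - z + t) / (2 * y * z)) = (1 - y - z - t) / 2 := by
  obtain ⟨hy, hz⟩ := mul_ne_zero_iff.1 hyz
  field_simp
  ring

theorem mp_fixed_point_iff (hyz : y * z ≠ 0) {s : K}
    (hs : s ^ 2 = (1 - z - y) ^ 2 - 4 * y * z) (w : K) :
    w * (1 - z - y - y * z * w) = 1 ↔
      w = (1 - y - z + s) / (2 * y * z) ∨ w = (1 - y - z - s) / (2 * y * z) := by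
  have hdiscrim : discrim (y * z) (-(1 - z - y)) 1 = s * s := by
    rw [discrim, ← sq, hs]
    ring
  have hquadratic :
      w * (1 - z - y - y * z * w) = 1 ↔ y * z * (w * w) + -(1 - z - y) * w + 1 = 0 := by
    constructor <;> intro h <;> linear_combination -h
  rw [hquadratic, quadratic_eq_zero_iff hyz hdiscrim, neg_neg, sub_right_comm 1 z y,
    mul_assoc 2 y z]

end FixedPoint

/-- The value `m(z) = (1 - y - z + √((1-z-y)² - 4yz))/(2yz)`, with the square-root
branch of positive imaginary part, is the unique solution in `ℂ⁺` of
`m = 1/(1 - z - y - yzm)`. -/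
theorem mp_fixed_point_unique (y : ℝ) (hy : 0 < y) (z : ℂ) (hz : 0 < z.im)
    (s : ℂ) (hs : s ^ 2 = (1 - z - y) ^ 2 - 4 * y * z) (hsim : 0 < s.im) :
    0 < ((1 - y - z + s) / (2 * y * z)).im ∧
      (1 - y - z + s) / (2 * y * z) =
        (1 - z - y - y * z * ((1 - y - z + s) / (2 * y * z)))⁻¹ ∧
      ∀ w : ℂ, 0 < w.im → w = (1 - z - y - y * z * w)⁻¹ →
        w = (1 - y - z + s) / (2 * y * z) := by
  have hyz : (y : ℂ) * z ≠ 0 :=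
    mul_ne_zero (ofReal_ne_zero.2 hy.ne') fun h => by simp [h] at hz
  have hzs : z.im < s.im := by
    simpa using im_lt_im_of_sq_eq_sq_sub_ofReal (u := z - (1 + y)) (c := 4 * y) (by positivity)
      (by simpa using hz.le) hsim (by rw [hs]; push_cast; ring)
  have hfix := eq_inv_of_mul_eq_one_left ((mp_fixed_point_iff hyz hs _).2 (Or.inl rfl))
  refine ⟨?_, hfix, fun w hw hwfix => ?_⟩
  · rw [hfix, inv_im_pos_iff, mp_denom_eq hyz]
    simp only [div_ofNat_im, sub_im, one_im, ofReal_im]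
    linarith
  · have hw0 : 1 - z - y - y * z * w ≠ 0 := fun h => by
      rw [h, inv_zero] at hwfix; simp [hwfix] at hw
    have hroots := (mp_fixed_point_iff hyz hs w).1 ((mul_eq_one_iff_eq_inv₀ hw0).2 hwfix)
    refine hroots.resolve_right fun hminus => ?_
    rw [hwfix, inv_im_pos_iff, hminus, sub_eq_add_neg _ s, mp_denom_eq hyz] at hw
    simp only [div_ofNat_im, sub_im, neg_im, one_im, ofReal_im] at hw
    linarith
end
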